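/- arXiv:0807.4957 — 4 statements merged into one kernel-verified Lean document; each statement's English description precedes it below -/
import Mathlib

section
/- Let E be a monoidal category which is locally presentable, abelian, whose monoidal product preserves colimits and finite limits in each variable, and let C be a comonoid in E. If f : C → D is a morphism of comonoids, then the image Im(U(f)) of the underlying map carries a comonoid structure making the image factorization U(C) → Im(f) → U(D) a factorization in Comon(E): the monomorphism m : Im(f) → U(D) exhibits Im(f) as an E-subobject of D, and the canonical epimorphism e : U(C) → Im(f) is a morphism of comonoids. -/
open CategoryTheory Limits MonoidalCategory

universe w v u

namespace Paper

/-- A small category `J` is `κ`-filtered if every diagram of size `< κ` in `J`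
admits a cocone. -/
def IsCardinalFiltered (J : Type v) [SmallCategory J] (κ : Cardinal.{v}) : Prop :=
  ∀ (K : Type v) [SmallCategory K], Cardinal.mk K < κ →
    Cardinal.mk ((X : K) × (Y : K) × (X ⟶ Y)) < κ →
    ∀ F : K ⥤ J, Nonempty (Limits.Cocone F)

/-- An object `X` of a category `C` is `κ`-presentable if its covariant hom functor
preserves `κ`-filtered colimits. -/
def IsPresentable {C : Type u} [Category.{v} C] (κ : Cardinal.{v}) (X : C) : Prop :=
  ∀ (J : Type v) [SmallCategory J], IsCardinalFiltered J κ →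
    Nonempty (PreservesColimitsOfShape J (coyoneda.obj (Opposite.op X)))

/-- A category is locally presentable if it is cocomplete and there is a regular cardinal `κ`
and a set of `κ`-presentable objects such that every object is a `κ`-filtered colimit of
objects from this set. -/
def LocallyPresentable (C : Type u) [Category.{v} C] : Prop :=
  HasColimitsOfSize.{v, v} C ∧
  ∃ κ : Cardinal.{v}, κ.IsRegular ∧
    ∃ (ι : Type v) (G : ι → C),
      (∀ i, IsPresentable κ (G i)) ∧
      ∀ X : C, ∃ (J : Type v) (_ : SmallCategory J) (_ : IsCardinalFiltered J κ)
        (F : J ⥤ C) (t : F ⟶ (Functor.const J).obj X),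
        Nonempty (IsColimit (Cocone.mk X t)) ∧ ∀ j, ∃ i, Nonempty (F.obj j ≅ G i)

/-- `f` is a retract of `g` in the arrow category. -/
def RetractOf {C : Type u} [Category.{v} C] {X Y X' Y' : C}
    (f : X ⟶ Y) (g : X' ⟶ Y') : Prop :=
  ∃ (s : X ⟶ X') (r : X' ⟶ X) (s' : Y ⟶ Y') (r' : Y' ⟶ Y),
    s ≫ r = 𝟙 X ∧ s' ≫ r' = 𝟙 Y ∧ s ≫ g = f ≫ s' ∧ g ≫ r' = r ≫ f

/-- A class of morphisms is closed under retracts. -/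
def ClosedUnderRetracts {C : Type u} [Category.{v} C] (P : MorphismProperty C) : Prop :=
  ∀ {X Y X' Y' : C} (f : X ⟶ Y) (g : X' ⟶ Y'), RetractOf f g → P g → P f

/-- A (Quillen) model structure on a category `C`: three classes of maps (weak equivalences,
cofibrations and fibrations) satisfying the usual axioms. -/
structure ModelStruct (C : Type u) [Category.{v} C] where
  W : MorphismProperty C
  Cof : MorphismProperty C
  Fib : MorphismProperty C
  w_id : W.ContainsIdentities
  cof_id : Cof.ContainsIdentities
  fib_id : Fib.ContainsIdentities
  w_two_out_of_three : W.HasTwoOutOfThreeProperty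
  w_retract : ClosedUnderRetracts W
  cof_retract : ClosedUnderRetracts Cof
  fib_retract : ClosedUnderRetracts Fib
  lift_trivCof_fib : ∀ {A B X Y : C} (i : A ⟶ B) (p : X ⟶ Y),
    Cof i → W i → Fib p → HasLiftingProperty i p
  lift_cof_trivFib : ∀ {A B X Y : C} (i : A ⟶ B) (p : X ⟶ Y),
    Cof i → Fib p → W p → HasLiftingProperty i p
  factor_trivCof_fib : ∀ {X Y : C} (f : X ⟶ Y), ∃ (Z : C) (i : X ⟶ Z) (p : Z ⟶ Y),
    Cof i ∧ W i ∧ Fib p ∧ i ≫ p = f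
  factor_cof_trivFib : ∀ {X Y : C} (f : X ⟶ Y), ∃ (Z : C) (i : X ⟶ Z) (p : Z ⟶ Y),
    Cof i ∧ Fib p ∧ W p ∧ i ≫ p = f

/-- A model structure is cofibrantly generated if there are *sets* `I` and `J` of morphisms
such that the trivial fibrations are the maps with the right lifting property with respect
to `I`, and the fibrations are the maps with the right lifting property with respect to `J`. -/
def ModelStruct.CofibrantlyGenerated {C : Type u} [Category.{v} C] (M : ModelStruct C) : Prop :=
  ∃ (ι₁ : Type v) (A₁ B₁ : ι₁ → C) (g₁ : ∀ i, A₁ i ⟶ B₁ i)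
    (ι₂ : Type v) (A₂ B₂ : ι₂ → C) (g₂ : ∀ i, A₂ i ⟶ B₂ i),
    (∀ i, M.Cof (g₁ i)) ∧ (∀ i, M.Cof (g₂ i) ∧ M.W (g₂ i)) ∧
    (∀ {X Y : C} (p : X ⟶ Y), (M.Fib p ∧ M.W p) ↔ ∀ i, HasLiftingProperty (g₁ i) p) ∧
    (∀ {X Y : C} (p : X ⟶ Y), M.Fib p ↔ ∀ i, HasLiftingProperty (g₂ i) p)

/-- The pushout-product of `i : K ⟶ L` and `i' : X ⟶ Y`, i.e. the canonical map
`(K ⊗ Y) ∪_{K ⊗ X} (L ⊗ X) ⟶ L ⊗ Y`. -/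
noncomputable def ppMap {C : Type u} [Category.{v} C] [MonoidalCategory C] [HasPushouts C]
    {K L X Y : C} (i : K ⟶ L) (i' : X ⟶ Y) :
    pushout (K ◁ i') (i ▷ X) ⟶ L ⊗ Y :=
  pushout.desc (i ▷ Y) (L ◁ i') (whisker_exchange i i')

end Paper

open Paper

/-!
Since `e := factorThruImage f` is a strong epimorphism and `m := image.ι f` is a monomorphism,
as is `m ⊗ m` because tensoring preserves monomorphisms, the square
`Δ_C ≫ (e ⊗ e) = e ≫ m ≫ Δ_D` has a diagonal filler `Δ : Im f ⟶ Im f ⊗ Im f`. Together with the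
counit `m ≫ ε_D` it is a comonoid structure: each axiom holds after composing with a monomorphism
built from `m`, where it becomes the corresponding axiom of `D`.
-/

namespace CategoryTheory

open ComonObj

variable {E : Type u} [Category.{v} E] [MonoidalCategory E]

theorem Comon.commSq_comul_of_fac {C D : Comon E} (f : C ⟶ D) {I : E} (e : C.X ⟶ I)
    (m : I ⟶ D.X) (fac : e ≫ m = f.hom) :
    CommSq (Δ[C.X] ≫ (e ⊗ₘ e)) e (m ⊗ₘ m) (m ≫ Δ[D.X]) :=
  ⟨by rw [Category.assoc, tensorHom_comp_tensorHom, fac, ← IsComonHom.hom_comul, reassoc_of% fac]⟩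

variable [∀ X : E, (tensorLeft X).PreservesMonomorphisms]
  [∀ X : E, (tensorRight X).PreservesMonomorphisms]

namespace MonoidalCategory

instance mono_whiskerLeft (X : E) {Y Z : E} (f : Y ⟶ Z) [Mono f] : Mono (X ◁ f) :=
  (tensorLeft X).map_mono f

instance mono_whiskerRight {X Y : E} (f : X ⟶ Y) [Mono f] (Z : E) : Mono (f ▷ Z) :=
  (tensorRight Z).map_mono f

instance mono_tensorHom {X Y X' Y' : E} (f : X ⟶ Y) (g : X' ⟶ Y') [Mono f] [Mono g] :
    Mono (f ⊗ₘ g) := by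
  rw [tensorHom_def]
  infer_instance

end MonoidalCategory

namespace Comon

section OfMono

variable (D : Comon E) {I : E} (m : I ⟶ D.X) [Mono m] (comul : I ⟶ I ⊗ I)
  (comul_m : comul ≫ (m ⊗ₘ m) = m ≫ Δ[D.X])

def ofMono : Comon E where
  X := I
  comon :=
    { counit := m ≫ ε[D.X]
      comul := comul
      counit_comul := by
        rw [← cancel_mono (𝟙_ E ◁ m), Category.assoc, comp_whiskerRight, Category.assoc,
          ← whisker_exchange, ← tensorHom_def_assoc, reassoc_of% comul_m]
        simp
      comul_counit := by
        rw [← cancel_mono (m ▷ 𝟙_ E), Category.assoc, MonoidalCategory.whiskerLeft_comp,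
          Category.assoc, whisker_exchange, ← tensorHom_def'_assoc, reassoc_of% comul_m]
        simp
      comul_assoc := by
        rw [← cancel_mono (m ⊗ₘ (m ⊗ₘ m))]
        simp only [Category.assoc, ← associator_naturality, whiskerLeft_comp_tensorHom,
          whiskerRight_comp_tensorHom_assoc, comul_m, ← tensorHom_comp_whiskerLeft,
          ← tensorHom_comp_whiskerRight_assoc, reassoc_of% comul_m, ComonObj.comul_assoc] }

def ofMonoHom : ofMono D m comul comul_m ⟶ D :=
  Hom.mk' m rfl comul_m.symm

end OfMono

section Image

variable {C D : Comon E} (f : C ⟶ D) {I : E} (e : C.X ⟶ I) (m : I ⟶ D.X) [StrongEpi e] [Mono m]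
  (fac : e ≫ m = f.hom)

noncomputable def image : Comon E :=
  ofMono D m (commSq_comul_of_fac f e m fac).lift (commSq_comul_of_fac f e m fac).fac_right

noncomputable def factorThruImage : C ⟶ image f e m fac :=
  Hom.mk' (N := image f e m fac) e
    (show e ≫ m ≫ ε[D.X] = ε[C.X] by rw [reassoc_of% fac, IsComonHom.hom_counit])
    (commSq_comul_of_fac f e m fac).fac_left

noncomputable def imageι : image f e m fac ⟶ D := ofMonoHom D m _ _

theorem image_fac : factorThruImage f e m fac ≫ imageι f e m fac = f := Comon.ext fac

end Image

end Comon

end CategoryTheory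

/-- The image of a morphism of comonoids is a comonoid: every morphism of comonoids factors,
inside the category of comonoids, as a map with epimorphic underlying map followed by a map
with monomorphic underlying map (the epi-mono image factorization of the underlying map). -/
theorem comon_image_factorization
    {E : Type u} [Category.{v} E] [MonoidalCategory E]
    [Abelian E] (hE : LocallyPresentable E)
    [∀ X : E, PreservesColimitsOfSize.{v, v} (tensorLeft X)]
    [∀ X : E, PreservesColimitsOfSize.{v, v} (tensorRight X)]
    [∀ X : E, PreservesFiniteLimits (tensorLeft X)]
    [∀ X : E, PreservesFiniteLimits (tensorRight X)]
    {C D : Comon E} (f : C ⟶ D) :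
    ∃ (M : Comon E) (e : C ⟶ M) (m : M ⟶ D),
      e ≫ m = f ∧ Epi e.hom ∧ Mono m.hom ∧
      -- the factorization is, up to isomorphism, the image factorization of `U f` in `E`
      ∃ iso : M.X ≅ Limits.image f.hom,
        iso.hom ≫ Limits.image.ι f.hom = m.hom ∧
        e.hom ≫ iso.hom = Limits.factorThruImage f.hom := by
  have fac := image.fac f.hom
  exact ⟨_, Comon.factorThruImage f _ _ fac, Comon.imageι f _ _ fac, Comon.image_fac f _ _ fac,
    inferInstanceAs (Epi (factorThruImage f.hom)), inferInstanceAs (Mono (image.ι f.hom)),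
    Iso.refl _, Category.id_comp _, Category.comp_id _⟩
end

section
/- Let E be a monoidal category which is locally presentable, abelian, and whose monoidal product preserves finite limits in each variable. For a comonoid C in E, the E-subobjects of C (those subobjects (D, i) in Comon(E)/C with U(i) a monomorphism in E) are precisely the strong subobjects of C in the category Comon(E). -/
/-!
Colimits of comonoids are computed in `E` (dually to limits of monoids), so the forgetful functor
preserves epimorphisms. Hence, if `i.hom` is mono, a square in `Comon E` against an epimorphism `z`
has a filler in `E`, where every mono is strong; the filler is a comonoid morphism because `z.hom`
is an epimorphic comonoid morphism and the comonoid laws can be checked after precomposing with it.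
Conversely, the image of `i.hom` in `E` inherits a comonoid structure: its comultiplication is the
diagonal filler of a square whose right side `m ⊗ m` is mono, the tensor product preserving monos.
A strong mono `i` then factors through this image by an epimorphism of comonoids, which must be
an isomorphism, so `i.hom` is mono.
-/

open CategoryTheory Limits MonoidalCategory

universe w v u

open Paper

namespace CategoryTheory

open scoped ComonObj

variable {C : Type*} [Category C] [MonoidalCategory C]

theorem MonoidalCategory.mono_tensorHom_s4
    [∀ X : C, (tensorLeft X).PreservesMonomorphisms]
    [∀ X : C, (tensorRight X).PreservesMonomorphisms]
    {X Y X' Y' : C} (f : X ⟶ Y) (g : X' ⟶ Y') [Mono f] [Mono g] : Mono (f ⊗ₘ g) := by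
  rw [tensorHom_def]
  have : Mono (f ▷ X') := (tensorRight X').map_mono f
  have : Mono (Y ◁ g) := (tensorLeft Y).map_mono g
  exact mono_comp _ _

theorem ComonObj.comul_assoc_hom (X : C) [ComonObj X] {Z : C} (f : X ⟶ Z) :
    Δ[X] ≫ (f ⊗ₘ (Δ[X] ≫ (f ⊗ₘ f))) = Δ[X] ≫ ((Δ[X] ≫ (f ⊗ₘ f)) ⊗ₘ f) ≫ (α_ Z Z Z).hom :=
  calc Δ[X] ≫ (f ⊗ₘ (Δ[X] ≫ (f ⊗ₘ f)))
      = Δ[X] ≫ (𝟙 X ⊗ₘ Δ[X]) ≫ (f ⊗ₘ (f ⊗ₘ f)) := by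
        rw [tensorHom_comp_tensorHom, Category.id_comp]
    _ = Δ[X] ≫ (Δ[X] ⊗ₘ 𝟙 X) ≫ ((f ⊗ₘ f) ⊗ₘ f) ≫ (α_ Z Z Z).hom := by
        rw [associator_naturality, id_tensorHom, tensorHom_id, ComonObj.comul_assoc_assoc]
    _ = Δ[X] ≫ ((Δ[X] ≫ (f ⊗ₘ f)) ⊗ₘ f) ≫ (α_ Z Z Z).hom := by
        rw [tensorHom_comp_tensorHom_assoc, Category.id_comp]

theorem IsComonHom.of_epi_comp {X Y Z : C} [ComonObj X] [ComonObj Y] [ComonObj Z]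
    (e : X ⟶ Y) [Epi e] [IsComonHom e] (f : Y ⟶ Z) [IsComonHom (e ≫ f)] : IsComonHom f where
  hom_counit := by
    rw [← cancel_epi e, ← Category.assoc, IsComonHom.hom_counit, IsComonHom.hom_counit]
  hom_comul := by
    rw [← cancel_epi e, ← Category.assoc, IsComonHom.hom_comul, IsComonHom.hom_comul_assoc,
      tensorHom_comp_tensorHom]

abbrev ComonObj.ofEpi {X Y : C} [ComonObj X] (e : X ⟶ Y) [Epi e] (counit : Y ⟶ 𝟙_ C)
    (comul : Y ⟶ Y ⊗ Y) (h_counit : e ≫ counit = ε[X]) (h_comul : e ≫ comul = Δ[X] ≫ (e ⊗ₘ e)) :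
    ComonObj Y where
  counit := counit
  comul := comul
  counit_comul := by
    rw [← cancel_epi e, reassoc_of% h_comul, ← tensorHom_id, tensorHom_comp_tensorHom, h_counit,
      Category.comp_id, ComonObj.counit_comul_hom]
  comul_counit := by
    rw [← cancel_epi e, reassoc_of% h_comul, ← id_tensorHom, tensorHom_comp_tensorHom, h_counit,
      Category.comp_id, ComonObj.comul_counit_hom]
  comul_assoc := by
    rw [← cancel_epi e, reassoc_of% h_comul, reassoc_of% h_comul, ← id_tensorHom, ← tensorHom_id,
      tensorHom_comp_tensorHom, tensorHom_comp_tensorHom_assoc, h_comul, Category.comp_id,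
      ComonObj.comul_assoc_hom]

namespace Comon

-- `forget C` is definitionally the opposite of `Mon.forget Cᵒᵖ`, which creates limits.
instance {J : Type*} [Category J] [HasColimitsOfShape J C] :
    PreservesColimitsOfShape J (forget C) :=
  have := hasLimitsOfShape_opposite_opposite_iff.2 ‹HasColimitsOfShape J C›
  have := preservesColimitsOfShape_leftOp J (Mon.forget Cᵒᵖ)
  preservesColimitsOfShape_of_natIso
    (Iso.refl ((Comon_EquivMon_OpOp C).functor ⋙ (Mon.forget Cᵒᵖ).leftOp))

instance hasLiftingProperty {A B M N : Comon C} (z : A ⟶ B) (f : M ⟶ N) [Epi z.hom]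
    [HasLiftingProperty z.hom f.hom] : HasLiftingProperty z f where
  sq_hasLift {u v} sq := by
    have sq' : CommSq u.hom z.hom f.hom v.hom := ⟨congrArg Hom.hom sq.w⟩
    have : IsComonHom (z.hom ≫ sq'.lift) := by rw [sq'.fac_left]; infer_instance
    have := IsComonHom.of_epi_comp z.hom sq'.lift
    exact ⟨⟨{ l := ⟨sq'.lift⟩, fac_left := ext sq'.fac_left, fac_right := ext sq'.fac_right }⟩⟩

theorem strongMono_of_mono_hom [HasPushouts C] [StrongMonoCategory C] {M N : Comon C}
    (f : M ⟶ N) [Mono f.hom] : StrongMono f where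
  mono := (forget C).mono_of_mono_map ‹Mono f.hom›
  rlp _ _ z _ :=
    have : Epi z.hom := (forget C).map_epi z
    have : StrongMono f.hom := strongMono_of_mono f.hom
    inferInstance

section Factorisation

variable {M N : Comon C} {f : M ⟶ N}

theorem comul_commSq (F : StrongEpiMonoFactorisation f.hom) :
    CommSq (Δ[M.X] ≫ (F.e ⊗ₘ F.e)) F.e (F.m ⊗ₘ F.m) (F.m ≫ Δ[N.X]) :=
  ⟨by rw [Category.assoc, tensorHom_comp_tensorHom, F.fac, ← IsComonHom.hom_comul,
    ← Category.assoc, F.fac]⟩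

variable [∀ X : C, (tensorLeft X).PreservesMonomorphisms]
  [∀ X : C, (tensorRight X).PreservesMonomorphisms]

instance (F : StrongEpiMonoFactorisation f.hom) : (comul_commSq F).HasLift :=
  have := MonoidalCategory.mono_tensorHom_s4 F.m F.m
  inferInstance

noncomputable def liftStrongEpiMonoFactorisation (F : StrongEpiMonoFactorisation f.hom) :
    MonoFactorisation f :=
  have h_counit : F.e ≫ F.m ≫ ε[N.X] = ε[M.X] := by
    rw [← Category.assoc, F.fac, IsComonHom.hom_counit]
  letI := ComonObj.ofEpi F.e _ _ h_counit (comul_commSq F).fac_left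
  { I := mk F.I
    m := Hom.mk' F.m rfl (comul_commSq F).fac_right.symm
    m_mono := (forget C).mono_of_mono_map F.m_mono
    e := Hom.mk' F.e h_counit (comul_commSq F).fac_left
    fac := ext F.fac }

theorem epi_liftStrongEpiMonoFactorisation_e (F : StrongEpiMonoFactorisation f.hom) :
    Epi (liftStrongEpiMonoFactorisation F).e :=
  (forget C).epi_of_epi_map (inferInstanceAs (Epi F.e))

theorem mono_hom_of_strongMono [HasStrongEpiMonoFactorisations C] (f : M ⟶ N) [StrongMono f] :
    Mono f.hom := by
  obtain ⟨F⟩ := HasStrongEpiMonoFactorisations.has_fac f.hom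
  let G := liftStrongEpiMonoFactorisation F
  have : Epi G.e := epi_liftStrongEpiMonoFactorisation_e F
  have : StrongMono (G.e ≫ G.m) := by rwa [G.fac]
  have : StrongMono G.e := strongMono_of_strongMono G.e G.m
  have : IsIso G.e := isIso_of_epi_of_strongMono G.e
  have : IsIso G.e.hom := (forget C).map_isIso G.e
  have : Mono G.m.hom := F.m_mono
  rw [← G.fac, comp_hom']
  exact mono_comp _ _

end Factorisation

end Comon

end CategoryTheory

/-- The `E`-subobjects of a comonoid `C` (morphisms of comonoids whose underlying map is a
monomorphism in `E`) are precisely the strong subobjects of `C` in `Comon(E)`. -/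
theorem comon_E_subobjects_are_strong_subobjects
    {E : Type u} [Category.{v} E] [MonoidalCategory E]
    [Abelian E] (hE : LocallyPresentable E)
    [∀ X : E, PreservesColimitsOfSize.{v, v} (tensorLeft X)]
    [∀ X : E, PreservesColimitsOfSize.{v, v} (tensorRight X)]
    [∀ X : E, PreservesFiniteLimits (tensorLeft X)]
    [∀ X : E, PreservesFiniteLimits (tensorRight X)]
    {D C : Comon E} (i : D ⟶ C) :
    Mono i.hom ↔ StrongMono i :=
  ⟨fun _ => Comon.strongMono_of_mono_hom i, fun _ => Comon.mono_hom_of_strongMono i⟩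
end

section
/- Let E be an abelian monoidal category whose monoidal product ⊗ is left exact in each variable. If i : D → C and j : E' → C are morphisms of comonoids in E such that U(i) and U(j) are monomorphisms, then the pullback D ∩ E' = D ×_C E' in E carries a comonoid structure (with comultiplication induced by those of D and E', and counit the restriction of the counit of C) making D ∩ E' a comonoid in E and the two projections D ∩ E' → D and D ∩ E' → E' morphisms of comonoids. -/
open CategoryTheory Limits MonoidalCategory

universe w v u

open Paper

/-!
Let `X = D ∩ E'` with inclusion `m : X ⟶ C`. The restriction `m ≫ Δ` factors through `D ⊗ C` and
through `E' ⊗ C`, hence through `X ⊗ C` because `- ⊗ C` preserves the pullback; symmetrically it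
factors through `C ⊗ X`. Left exactness of `⊗` makes `X ⊗ X` the intersection of `X ⊗ C` and
`C ⊗ X` inside `C ⊗ C`, so `Δ` restricts to `δ : X ⟶ X ⊗ X`. Since `⊗` preserves monomorphisms,
the comonoid axioms for `(X, δ, m ≫ ε)` and the comonoid-map property of the projections can be
checked after composing with monomorphisms into tensor powers of `C`, where they are those of `C`.
-/

namespace CategoryTheory

open ComonObj

section Mono

variable {E : Type u} [Category.{v} E] [MonoidalCategory E]

instance mono_whiskerLeft (X : E) [(tensorLeft X).PreservesMonomorphisms] {Y Z : E} (f : Y ⟶ Z)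
    [Mono f] : Mono (X ◁ f) :=
  (tensorLeft X).map_mono f

instance mono_whiskerRight {Y Z : E} (f : Y ⟶ Z) [Mono f] (X : E)
    [(tensorRight X).PreservesMonomorphisms] : Mono (f ▷ X) :=
  (tensorRight X).map_mono f

instance mono_tensorHom {X Y Z W : E} (f : X ⟶ Y) (g : Z ⟶ W) [Mono f] [Mono g]
    [(tensorRight Z).PreservesMonomorphisms] [(tensorLeft Y).PreservesMonomorphisms] :
    Mono (f ⊗ₘ g) := by
  rw [MonoidalCategory.tensorHom_def]
  infer_instance

variable [∀ X : E, (tensorLeft X).PreservesMonomorphisms]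
  [∀ X : E, (tensorRight X).PreservesMonomorphisms]

abbrev ComonObj.ofMono {X C : E} [ComonObj C] (m : X ⟶ C) [Mono m] (δ : X ⟶ X ⊗ X)
    (hδ : δ ≫ (m ⊗ₘ m) = m ≫ Δ) : ComonObj X where
  counit := m ≫ ε
  comul := δ
  counit_comul := by
    rw [← cancel_mono (𝟙_ E ◁ m), Category.assoc, ← whisker_exchange, comp_whiskerRight,
      ← tensorHom_def'_assoc, reassoc_of% hδ]
    simp
  comul_counit := by
    rw [← cancel_mono (m ▷ 𝟙_ E), Category.assoc, whisker_exchange,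
      MonoidalCategory.whiskerLeft_comp, ← tensorHom_def_assoc, reassoc_of% hδ]
    simp
  comul_assoc := by
    rw [← cancel_mono (m ⊗ₘ (m ⊗ₘ m)), Category.assoc, whiskerLeft_comp_tensorHom, hδ,
      Category.assoc, Category.assoc, ← associator_naturality, whiskerRight_comp_tensorHom_assoc,
      hδ, ← tensorHom_comp_whiskerLeft, ← tensorHom_comp_whiskerRight, Category.assoc,
      reassoc_of% hδ, reassoc_of% hδ, comul_assoc]

lemma ComonObj.isComonHom_ofMono {X C : E} [ComonObj C] (m : X ⟶ C) [Mono m] (δ : X ⟶ X ⊗ X)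
    (hδ : δ ≫ (m ⊗ₘ m) = m ≫ Δ) :
    letI := ComonObj.ofMono m δ hδ
    IsComonHom m :=
  letI := ComonObj.ofMono m δ hδ
  ⟨rfl, hδ.symm⟩

lemma IsComonHom.of_comp {X Y Z : E} [ComonObj X] [ComonObj Y] [ComonObj Z] (p : X ⟶ Y)
    (k : Y ⟶ Z) [Mono k] [IsComonHom k] [IsComonHom (p ≫ k)] : IsComonHom p where
  hom_counit := by rw [← IsComonHom.hom_counit k, ← Category.assoc, IsComonHom.hom_counit]
  hom_comul := by
    rw [← cancel_mono (k ⊗ₘ k), Category.assoc, ← IsComonHom.hom_comul k, ← Category.assoc,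
      IsComonHom.hom_comul, Category.assoc, tensorHom_comp_tensorHom]

end Mono

section Pullback

variable {E : Type u} [Category.{v} E] [MonoidalCategory E] {P X Y Z : E}
  {fst : P ⟶ X} {snd : P ⟶ Y} {f : X ⟶ Z} {g : Y ⟶ Z}

lemma IsPullback.whiskerRight (h : IsPullback fst snd f g) (W : E)
    [PreservesLimit (cospan f g) (tensorRight W)] :
    IsPullback (fst ▷ W) (snd ▷ W) (f ▷ W) (g ▷ W) := by
  simpa using h.map (tensorRight W)

lemma IsPullback.whiskerLeft (h : IsPullback fst snd f g) (W : E)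
    [PreservesLimit (cospan f g) (tensorLeft W)] :
    IsPullback (W ◁ fst) (W ◁ snd) (W ◁ f) (W ◁ g) := by
  simpa using h.map (tensorLeft W)

end Pullback

section Abelian

variable {E : Type u} [Category.{v} E] [MonoidalCategory E] [Abelian E]
  [∀ X : E, PreservesFiniteLimits (tensorLeft X)]

/-- `A ⊗ A'` is the intersection of `A ⊗ B'` and `B ⊗ A'` inside `B ⊗ B'`. -/
lemma exists_comp_tensorHom_eq [∀ X : E, (tensorRight X).PreservesMonomorphisms]
    {A B A' B' T : E} (f : A ⟶ B) (g : A' ⟶ B') [Mono f] [Mono g] {h : T ⟶ B ⊗ B'}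
    (s : T ⟶ A ⊗ B') (hs : s ≫ f ▷ B' = h) (t : T ⟶ B ⊗ A') (ht : t ≫ B ◁ g = h) :
    ∃ l : T ⟶ A ⊗ A', l ≫ (f ⊗ₘ g) = h := by
  -- `A ◁ g` is a kernel of `A ◁ cokernel.π g`, which kills `s` because `f ▷ cokernel g` is monic.
  have hker := isLimitForkMapOfIsLimit' (tensorLeft A) (cokernel.condition g)
    (Abelian.monoIsKernelOfCokernel (CokernelCofork.ofπ _ (cokernel.condition g))
      (cokernelIsCokernel g))
  have hB : B ◁ (g ≫ cokernel.π g) = 0 := by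
    rw [cokernel.condition]
    simpa using (tensorLeft B).map_zero A' (cokernel g)
  have hs₀ : s ≫ A ◁ cokernel.π g = 0 := by
    rw [← cancel_mono (f ▷ cokernel g), Category.assoc, whisker_exchange, reassoc_of% hs, ← ht,
      Category.assoc, ← MonoidalCategory.whiskerLeft_comp, hB, comp_zero, zero_comp]
  obtain ⟨l, hl : l ≫ A ◁ g = s⟩ := KernelFork.IsLimit.lift' hker s hs₀
  exact ⟨l, by rw [tensorHom_def', reassoc_of% hl, hs]⟩

lemma exists_comul_of_isPullback [∀ X : E, PreservesFiniteLimits (tensorRight X)]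
    {X D D' C : E} [ComonObj D] [ComonObj D'] [ComonObj C] {fst : X ⟶ D} {snd : X ⟶ D'}
    {i : D ⟶ C} {j : D' ⟶ C} [IsComonHom i] [IsComonHom j] [Mono i] [Mono j]
    (hP : IsPullback fst snd i j) :
    ∃ δ : X ⟶ X ⊗ X, δ ≫ ((fst ≫ i) ⊗ₘ (fst ≫ i)) = (fst ≫ i) ≫ Δ := by
  have : Mono fst := hP.mono_fst_of_mono
  have hD : (fst ≫ Δ ≫ D ◁ i) ≫ i ▷ C = (fst ≫ i) ≫ Δ := by simp [tensorHom_def']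
  have hD' : (snd ≫ Δ ≫ D' ◁ j) ≫ j ▷ C = (fst ≫ i) ≫ Δ := by
    rw [hP.w]; simp [tensorHom_def']
  have hE : (fst ≫ Δ ≫ i ▷ D) ≫ C ◁ i = (fst ≫ i) ≫ Δ := by
    simp [MonoidalCategory.tensorHom_def]
  have hE' : (snd ≫ Δ ≫ j ▷ D') ≫ C ◁ j = (fst ≫ i) ≫ Δ := by
    rw [hP.w]; simp [MonoidalCategory.tensorHom_def]
  have hR := hP.whiskerRight C
  have hL := hP.whiskerLeft C
  refine exists_comp_tensorHom_eq (fst ≫ i) (fst ≫ i) (hR.lift _ _ (hD.trans hD'.symm)) ?_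
    (hL.lift _ _ (hE.trans hE'.symm)) ?_
  · rw [comp_whiskerRight, ← Category.assoc, hR.lift_fst, hD]
  · rw [MonoidalCategory.whiskerLeft_comp, ← Category.assoc, hL.lift_fst, hE]

end Abelian

end CategoryTheory

/-- **Lemma 2.5, second part** If `i : D ⟶ C` and `j : E' ⟶ C` are morphisms of comonoids with
monomorphic underlying maps, then the intersection `D ∩ E'` (the pullback of the underlying
maps in `E`) carries a comonoid structure, and the two projections are morphisms of comonoids. -/
theorem comon_intersection
    {E : Type u} [Category.{v} E] [MonoidalCategory E] [Abelian E]
    [∀ X : E, PreservesFiniteLimits (tensorLeft X)]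
    [∀ X : E, PreservesFiniteLimits (tensorRight X)]
    {D E' C : Comon E} (i : D ⟶ C) (j : E' ⟶ C)
    (hi : Mono i.hom) (hj : Mono j.hom) :
    ∃ (P : Comon E) (pD : P ⟶ D) (pE : P ⟶ E'),
      IsPullback pD.hom pE.hom i.hom j.hom := by
  have hP := IsPullback.of_hasPullback i.hom j.hom
  obtain ⟨δ, hδ⟩ := exists_comul_of_isPullback hP
  let _ := ComonObj.ofMono _ δ hδ
  have hm := ComonObj.isComonHom_ofMono _ δ hδ
  have hm' : IsComonHom (pullback.snd i.hom j.hom ≫ j.hom) := by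
    rwa [← pullback.condition]
  have := IsComonHom.of_comp (pullback.fst i.hom j.hom) i.hom
  have := IsComonHom.of_comp (pullback.snd i.hom j.hom) j.hom
  exact ⟨.mk (pullback i.hom j.hom), Comon.Hom.mk (pullback.fst i.hom j.hom),
    Comon.Hom.mk (pullback.snd i.hom j.hom), hP⟩
end

section
/- (Dual of Quillen's path-object argument.) Let E be a model category and F : C → E a functor admitting a right adjoint G : E → C. Define a map f of C to be a cofibration (resp. weak equivalence) if F(f) is a cofibration (resp. weak equivalence) in E. Suppose C is finitely cocomplete, has a cofibrant replacement functor, and has a functorial cylinder object for cofibrant objects (for each cofibrant X a factorization X ⊔ X →(i₀⊔i₁) Cyl(X) →(p) X of the codiagonal with i₀⊔i₁ a cofibration and p a weak equivalence). Then every map of C that has the right lifting property with respect to all cofibrations is a weak equivalence. -/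
/-!
Since `Q Y` is cofibrant, `q_Y` lifts through `f` to some `s`. Lifting a cylinder on `Q X`
against `f` gives a left homotopy from `q_X` to `Q f ≫ s`, so `F (Q f ≫ s)` is a weak
equivalence, as is `F (s ≫ f) = F q_Y`; two-out-of-six then makes `F s`, hence `F f`, a weak
equivalence.

Two-out-of-six for `x`, `y`, `z` (`x ≫ y` and `y ≫ z` weak equivalences) reduces, by
factorizations, to `x`, `y` cofibrations and `z` a fibration. There `y` factors as trivial
cofibrations followed by a fibration `k`, the trivial cofibration `x ≫ y` yields a section `σ`
of `k`, and lifting a cylinder against the trivial fibration `k ≫ z` shows `k ≫ σ` homotopic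
to the identity; `k` is a retract of `k ≫ σ`.
-/

open CategoryTheory Limits MonoidalCategory

universe w v u

open Paper

namespace CategoryTheory.MorphismProperty

variable {C : Type*} [Category C] (W : MorphismProperty C)

theorem mem_of_homotopic_mem [W.HasTwoOutOfThreeProperty] [W.ContainsIdentities]
    {A Z B : C} {i₀ i₁ : A ⟶ Z} {p : Z ⟶ A} (hi₀ : i₀ ≫ p = 𝟙 A) (hi₁ : i₁ ≫ p = 𝟙 A)
    (hp : W p) (H : Z ⟶ B) (h₀ : W (i₀ ≫ H)) : W (i₁ ≫ H) := by
  have mem_of_section {i : A ⟶ Z} (hi : i ≫ p = 𝟙 A) : W i :=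
    W.of_postcomp i p hp (hi ▸ W.id_mem A)
  exact W.comp_mem _ _ (mem_of_section hi₁) (W.of_precomp _ _ (mem_of_section hi₀) h₀)

end CategoryTheory.MorphismProperty

namespace Paper.ModelStruct

variable {E : Type u} [Category.{v} E] (M : ModelStruct E)

instance : M.W.HasTwoOutOfThreeProperty := M.w_two_out_of_three

instance : M.W.ContainsIdentities := M.w_id

theorem cof_of_hasLiftingProperty {A B : E} (g : A ⟶ B)
    (h : ∀ {X Y : E} (p : X ⟶ Y), M.Fib p → M.W p → HasLiftingProperty g p) : M.Cof g := by
  obtain ⟨Z, i, p, hi, hp, hpw, hip⟩ := M.factor_cof_trivFib g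
  have := h p hp hpw
  have sq : CommSq i g p (𝟙 B) := ⟨by simpa using hip⟩
  exact M.cof_retract g i ⟨𝟙 A, 𝟙 A, sq.lift, p, by simp, sq.fac_right,
    by simp, by simpa using hip⟩ hi

theorem fib_of_hasLiftingProperty {X Y : E} (p : X ⟶ Y)
    (h : ∀ {A B : E} (g : A ⟶ B), M.Cof g → M.W g → HasLiftingProperty g p) : M.Fib p := by
  obtain ⟨Z, j, q, hj, hjw, hq, hjq⟩ := M.factor_trivCof_fib p
  have := h j hj hjw
  have sq : CommSq (𝟙 X) j p q := ⟨by simpa using hjq.symm⟩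
  exact M.fib_retract p q ⟨j, sq.lift, 𝟙 Y, 𝟙 Y, sq.fac_left, by simp,
    by simpa using hjq, by simp⟩ hq

theorem cof_comp {A B D : E} {f : A ⟶ B} {g : B ⟶ D} (hf : M.Cof f) (hg : M.Cof g) :
    M.Cof (f ≫ g) :=
  M.cof_of_hasLiftingProperty _ fun p hp hpw =>
    have := M.lift_cof_trivFib f p hf hp hpw
    have := M.lift_cof_trivFib g p hg hp hpw
    inferInstance

theorem fib_comp {X Y Z : E} {p : X ⟶ Y} {q : Y ⟶ Z} (hp : M.Fib p) (hq : M.Fib q) :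
    M.Fib (p ≫ q) :=
  M.fib_of_hasLiftingProperty _ fun g hg hgw =>
    have := M.lift_trivCof_fib g p hg hgw hp
    have := M.lift_trivCof_fib g q hg hgw hq
    inferInstance

theorem w_of_section_of_trivFib_comp [HasBinaryCoproducts E] {T R S : E} {p : T ⟶ R}
    {σ : R ⟶ T} (w : R ⟶ S) (hσ : σ ≫ p = 𝟙 R) (hfib : M.Fib (p ≫ w)) (hw : M.W (p ≫ w)) :
    M.W p := by
  obtain ⟨Cyl, c, v, hc, -, hv, hcv⟩ := M.factor_cof_trivFib (coprod.desc (𝟙 T) (𝟙 T))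
  have := M.lift_cof_trivFib c (p ≫ w) hc hfib hw
  have sq : CommSq (coprod.desc (𝟙 T) (p ≫ σ)) c (p ≫ w) (v ≫ p ≫ w) :=
    ⟨by ext <;> simp [reassoc_of% hcv, reassoc_of% hσ]⟩
  have hpσ : M.W (p ≫ σ) := by
    simpa [sq.fac_left, coprod.inr_desc] using
      M.W.mem_of_homotopic_mem (i₀ := coprod.inl ≫ c) (i₁ := coprod.inr ≫ c)
        (by simp [hcv, coprod.inl_desc]) (by simp [hcv, coprod.inr_desc]) hv sq.lift
        (by simpa [sq.fac_left, coprod.inl_desc] using M.W.id_mem T)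
  exact M.w_retract p (p ≫ σ)
    ⟨𝟙 T, 𝟙 T, σ, p, by simp, hσ, by simp, by simp [hσ]⟩ hpσ

theorem two_out_of_six_of_cof_cof_fib [HasBinaryCoproducts E] {P Q R S : E} {x : P ⟶ Q}
    {y : Q ⟶ R} {z : R ⟶ S} (hx : M.Cof x) (hy : M.Cof y) (hz : M.Fib z)
    (hxy : M.W (x ≫ y)) (hyz : M.W (y ≫ z)) : M.W y := by
  obtain ⟨T, j, q, hj, hjw, -, hjq⟩ := M.factor_trivCof_fib (y ≫ z)
  have := M.lift_trivCof_fib j z hj hjw hz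
  have sq₁ : CommSq y j z q := ⟨hjq.symm⟩
  obtain ⟨T', k₁, k₂, -, hk₁w, hk₂, hk⟩ := M.factor_trivCof_fib sq₁.lift
  have hy_eq : y = j ≫ k₁ ≫ k₂ := by rw [hk, sq₁.fac_left]
  have hk₂z : M.W (k₂ ≫ z) := by
    refine M.W.of_precomp k₁ _ hk₁w ?_
    rw [← Category.assoc, hk, sq₁.fac_right]
    exact M.W.of_precomp j q hjw (hjq ▸ hyz)
  have := M.lift_trivCof_fib (x ≫ y) k₂ (M.cof_comp hx hy) hxy hk₂
  have sq₂ : CommSq (x ≫ j ≫ k₁) (x ≫ y) k₂ (𝟙 R) := ⟨by simp [hy_eq]⟩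
  have hk₂w : M.W k₂ := M.w_of_section_of_trivFib_comp z sq₂.fac_right (M.fib_comp hk₂ hz) hk₂z
  exact hy_eq ▸ M.W.comp_mem _ _ hjw (M.W.comp_mem _ _ hk₁w hk₂w)

theorem two_out_of_six_of_cof_fib [HasBinaryCoproducts E] {P Q R S : E}
    {x : P ⟶ Q} {y : Q ⟶ R} {z : R ⟶ S} (hx : M.Cof x) (hz : M.Fib z)
    (hxy : M.W (x ≫ y)) (hyz : M.W (y ≫ z)) : M.W y := by
  obtain ⟨Q', i, p, hi, hp, hpw, hip⟩ := M.factor_cof_trivFib y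
  subst hip
  refine M.W.comp_mem _ _ ?_ hpw
  refine M.two_out_of_six_of_cof_cof_fib hx hi (M.fib_comp hp hz) ?_ (by simpa using hyz)
  exact M.W.of_postcomp _ p hpw (by simpa using hxy)

theorem two_out_of_six_of_cof [HasBinaryCoproducts E] {P Q R S : E} {x : P ⟶ Q}
    {y : Q ⟶ R} {z : R ⟶ S} (hx : M.Cof x) (hxy : M.W (x ≫ y)) (hyz : M.W (y ≫ z)) :
    M.W y := by
  obtain ⟨R', e, z', -, hew, hz', hez⟩ := M.factor_trivCof_fib z
  subst hez
  refine M.W.of_postcomp _ e hew (M.two_out_of_six_of_cof_fib hx hz' ?_ ?_)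
  · simpa using M.W.comp_mem _ _ hxy hew
  · simpa using hyz

theorem two_out_of_six [HasBinaryCoproducts E] {P Q R S : E} {x : P ⟶ Q} {y : Q ⟶ R}
    {z : R ⟶ S} (hxy : M.W (x ≫ y)) (hyz : M.W (y ≫ z)) : M.W y := by
  obtain ⟨P', i, p, hi, -, hpw, hip⟩ := M.factor_cof_trivFib x
  subst hip
  refine M.W.of_precomp p y hpw (M.two_out_of_six_of_cof (z := z) hi (by simpa using hxy) ?_)
  simpa using M.W.comp_mem _ _ hpw hyz

end Paper.ModelStruct

theorem dual_quillen_path_object_argument_general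
    {E : Type u} [Category.{v} E] [HasFiniteColimits E]
    (M : ModelStruct E)
    {C : Type w} [Category.{v} C] [HasFiniteColimits C]
    (F : C ⥤ E)
    -- a cofibrant replacement functor
    (Q : C ⥤ C) (q : Q ⟶ 𝟭 C)
    (hQcof : ∀ X : C, M.Cof (F.map (initial.to (Q.obj X))))
    (hQw : ∀ X : C, M.W (F.map (q.app X)))
    -- a cylinder object for each cofibrant object
    (hcyl : ∀ X : C, M.Cof (F.map (initial.to X)) →
      ∃ (Z : C) (i : X ⨿ X ⟶ Z) (p : Z ⟶ X),
        i ≫ p = coprod.desc (𝟙 X) (𝟙 X) ∧ M.Cof (F.map i) ∧ M.W (F.map p))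
    {X Y : C} (f : X ⟶ Y)
    (hf : ∀ {A B : C} (g : A ⟶ B), M.Cof (F.map g) → HasLiftingProperty g f) :
    M.W (F.map f) := by
  have := hf _ (hQcof Y)
  have sq₀ : CommSq (initial.to X) (initial.to (Q.obj Y)) f (q.app Y) := ⟨initial.hom_ext _ _⟩
  obtain ⟨s, hs⟩ : ∃ s, s ≫ f = q.app Y := ⟨sq₀.lift, sq₀.fac_right⟩
  obtain ⟨Z, i, p, hip, hi, hp⟩ := hcyl (Q.obj X) (hQcof X)
  have := hf i hi
  have sq : CommSq (coprod.desc (q.app X) (Q.map f ≫ s)) i f (p ≫ q.app X ≫ f) :=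
    ⟨by ext <;> simp [reassoc_of% hip, hs, coprod.inl_desc, coprod.inr_desc]⟩
  have hQfs : M.W (F.map (Q.map f ≫ s)) := by
    simpa [sq.fac_left, coprod.inr_desc] using
      (M.W.inverseImage F).mem_of_homotopic_mem (i₀ := coprod.inl ≫ i) (i₁ := coprod.inr ≫ i)
        (by simp [hip, coprod.inl_desc]) (by simp [hip, coprod.inr_desc]) hp sq.lift
        (by simpa [sq.fac_left, coprod.inl_desc] using hQw X)
  have hsf : M.W (F.map s ≫ F.map f) := by simpa [← F.map_comp, hs] using hQw Y
  exact M.W.of_precomp _ _ (M.two_out_of_six (by simpa using hQfs) hsf) hsf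

/-- **2.6, the dual of Quillen's path-object argument.**
Let `E` be a model category and `F ⊣ G` an adjunction, where cofibrations and weak
equivalences in `C` are created by `F`. If `C` is finitely cocomplete, has a cofibrant
replacement functor and a (functorial) cylinder object for cofibrant objects, then every map
of `C` with the right lifting property with respect to all cofibrations is a weak
equivalence. -/
theorem dual_quillen_path_object_argument
    {E : Type u} [Category.{v} E] [HasFiniteLimits E] [HasFiniteColimits E]
    (M : ModelStruct E)
    {C : Type w} [Category.{v} C] [HasFiniteColimits C]
    (F : C ⥤ E) (G : E ⥤ C) (adj : F ⊣ G)
    -- a cofibrant replacement functor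
    (Q : C ⥤ C) (q : Q ⟶ 𝟭 C)
    (hQcof : ∀ X : C, M.Cof (F.map (initial.to (Q.obj X))))
    (hQw : ∀ X : C, M.W (F.map (q.app X)))
    -- a cylinder object for each cofibrant object
    (hcyl : ∀ X : C, M.Cof (F.map (initial.to X)) →
      ∃ (Z : C) (i : X ⨿ X ⟶ Z) (p : Z ⟶ X),
        i ≫ p = coprod.desc (𝟙 X) (𝟙 X) ∧ M.Cof (F.map i) ∧ M.W (F.map p))
    {X Y : C} (f : X ⟶ Y)
    (hf : ∀ {A B : C} (g : A ⟶ B), M.Cof (F.map g) → HasLiftingProperty g f) :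
    M.W (F.map f) :=
  dual_quillen_path_object_argument_general M F Q q hQcof hQw hcyl f hf
end
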